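/- With the automaton of the previous context, define q ∼ₙ p iff q, p ∈ ℤ and q ≡ p (mod 2ⁿ). Then for every letter a ∈ A and states q ∼ₙ p (with n ≥ 1), we have δ(q,a) ∼ₙ₋₁ δ(p,a) or both δ(q,a) = δ(p,a) = ⊥; consequently states equivalent under ∼ₙ accept the same words of length at most n, and the relations ∼ₙ are pairwise distinct for all n (they never stabilize). -/

import Mathlib

/-- Alphabet symbols: `start`, and binary digits `b0`, `b1`. -/
inductive Sym19 where
  | start : Sym19
  | b0 : Sym19
  | b1 : Sym19
deriving DecidableEq

/-- States: integers, the initial state `eps`, and the sink `bot`. -/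
inductive St19 where
  | int : ℤ → St19
  | eps : St19
  | bot : St19
deriving DecidableEq

/-- The digit value of a symbol. -/
def symVal19 : Sym19 → ℤ
  | Sym19.start => 0
  | Sym19.b0 => 0
  | Sym19.b1 => 1

/-- Transition function of the automaton. -/
def delta19 : St19 → Sym19 × ℤ → St19
  | St19.eps, (Sym19.start, i) => St19.int i
  | St19.eps, (Sym19.b0, _) => St19.bot
  | St19.eps, (Sym19.b1, _) => St19.bot
  | St19.int i, (σ, j) =>
      if σ = Sym19.start then St19.bot
      else if (i - j - symVal19 σ) % 2 = 0 then St19.int ((i - j - symVal19 σ) / 2 + j)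
      else St19.bot
  | St19.bot, _ => St19.bot

/-- The relation `∼ₙ`: two integer states congruent mod `2ⁿ` are related, and every state is
related to itself. -/
def simRel19 (n : ℕ) (q p : St19) : Prop :=
  (∃ a b : ℤ, q = St19.int a ∧ p = St19.int b ∧ ((2 : ℤ) ^ n) ∣ a - b) ∨ q = p

/-! A letter `(σ, j)` sends an integer state `i` to `(i - j - σ)/2 + j` when `i - j - σ` is even.
Congruence mod `2ⁿ⁺¹` fixes that parity, and halving loses exactly one factor of two, so every
letter lowers the level of `∼` by one; after at most `n` letters two `∼ₙ`-related states are
still both integers or equal. The pair `0, 2ⁿ` separates `∼ₙ` from `∼ₙ₊₁`. -/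

lemma Int.ediv_two_modEq_of_modEq_two_pow_succ {n : ℕ} {x y : ℤ}
    (h : x ≡ y [ZMOD 2 ^ (n + 1)]) : x / 2 ≡ y / 2 [ZMOD 2 ^ n] := by
  obtain ⟨k, hk⟩ := h.dvd
  have hy : y = x + 2 * (2 ^ n * k) := by rw [← mul_assoc, ← pow_succ']; linarith
  rw [hy, Int.add_mul_ediv_left _ _ two_ne_zero]
  exact (Int.modEq_add_fac_self).symm

lemma simRel19_int_int_iff {n : ℕ} {a b : ℤ} :
    simRel19 n (.int a) (.int b) ↔ a ≡ b [ZMOD 2 ^ n] := by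
  rw [Int.modEq_iff_dvd, dvd_sub_comm]
  constructor
  · rintro (⟨_, _, ⟨⟩, ⟨⟩, hd⟩ | hab)
    · exact hd
    · cases hab; simp
  · exact fun hd => .inl ⟨a, b, rfl, rfl, hd⟩

lemma simRel19_delta19 {n : ℕ} (a : Sym19 × ℤ) {q p : St19} (h : simRel19 (n + 1) q p) :
    simRel19 n (delta19 q a) (delta19 p a) := by
  rcases h with ⟨x, y, rfl, rfl, hd⟩ | rfl
  · obtain ⟨σ, j⟩ := a
    by_cases hσ : σ = Sym19.start
    · subst hσ; exact .inr rfl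
    have hxy : x - j - symVal19 σ ≡ y - j - symVal19 σ [ZMOD 2 ^ (n + 1)] :=
      ((Int.modEq_iff_dvd.mpr (dvd_sub_comm.mp hd)).sub_right _).sub_right _
    have hpar : (x - j - symVal19 σ) % 2 = (y - j - symVal19 σ) % 2 :=
      hxy.of_dvd (dvd_pow_self 2 n.succ_ne_zero)
    by_cases heven : (x - j - symVal19 σ) % 2 = 0
    · simp only [delta19, hσ, if_false, heven, ← hpar, if_true]
      exact simRel19_int_int_iff.mpr
        ((Int.ediv_two_modEq_of_modEq_two_pow_succ hxy).add_right j)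
    · simp only [delta19, hσ, if_false, heven, ← hpar]
      exact .inr rfl
  · exact .inr rfl

lemma simRel19_foldl_delta19 (w : List (Sym19 × ℤ)) {n : ℕ} {q p : St19}
    (h : simRel19 n q p) (hw : w.length ≤ n) :
    simRel19 (n - w.length) (w.foldl delta19 q) (w.foldl delta19 p) := by
  induction w generalizing n q p with
  | nil => exact h
  | cons a w ih =>
    obtain ⟨n, rfl⟩ : ∃ m, n = m + 1 := ⟨n - 1, by simp at hw; omega⟩
    simpa using ih (simRel19_delta19 a h) (by simpa using hw)

lemma simRel19.exists_int_iff {n : ℕ} {q p : St19} (h : simRel19 n q p) :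
    (∃ m : ℤ, q = .int m) ↔ (∃ m : ℤ, p = .int m) := by
  rcases h with ⟨a, b, rfl, rfl, -⟩ | rfl
  · exact ⟨fun _ => ⟨b, rfl⟩, fun _ => ⟨a, rfl⟩⟩
  · rfl

lemma simRel19_zero_two_pow (n : ℕ) :
    simRel19 n (.int 0) (.int (2 ^ n)) ∧ ¬ simRel19 (n + 1) (.int 0) (.int (2 ^ n)) := by
  simp only [simRel19_int_int_iff, Int.modEq_iff_dvd, sub_zero]
  exact ⟨dvd_rfl, by rw [pow_dvd_pow_iff two_ne_zero (by decide)]; omega⟩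

/-- States equivalent under `∼ₙ₊₁` go to states equivalent under `∼ₙ`; consequently states
equivalent under `∼ₙ` accept the same words of length at most `n`; and the relations `∼ₙ`
never stabilize: for each `n` some pair is `∼ₙ`-equivalent but not `∼ₙ₊₁`-equivalent. -/
theorem stmt_19 :
    (∀ (n : ℕ) (a : Sym19 × ℤ) (q p : St19),
      simRel19 (n + 1) q p → simRel19 n (delta19 q a) (delta19 p a)) ∧
    (∀ (n : ℕ) (q p : St19), simRel19 n q p →
      ∀ w : List (Sym19 × ℤ), w.length ≤ n →
        ((∃ m : ℤ, w.foldl delta19 q = St19.int m) ↔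
         (∃ m : ℤ, w.foldl delta19 p = St19.int m))) ∧
    (∀ n : ℕ, ∃ q p : St19, simRel19 n q p ∧ ¬ simRel19 (n + 1) q p) := by
  refine ⟨fun _ a _ _ h => simRel19_delta19 a h, ?_, ?_⟩
  · exact fun _ _ _ h w hw => (simRel19_foldl_delta19 w h hw).exists_int_iff
  · exact fun n => ⟨_, _, simRel19_zero_two_pow n⟩
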